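/- arXiv:1810.12969 — 4 statements merged into one kernel-verified Lean document; each statement's English description precedes it below -/
import Mathlib

section
/- Fix ε ∈ {+1,−1} and λ, u ∈ ℂ. Assume θ_{01}((λ+4εlη)/2, τ/2) ≠ 0, θ_{01}(λ/2, τ/2) ≠ 0, and that θ_{11}(η,τ), θ_{10}(η,τ), θ_{00}(η,τ), θ_{01}(η,τ) are all nonzero; set p' := −θ_{00}((λ+4εlη)/2, τ/2)/θ_{01}((λ+4εlη)/2, τ/2). Then the difference operator α := W_0(u)·ρ^l(S^0) + W_3(u)·ρ^l(S^3) − p'·(W_1(u)·ρ^l(S^1) + i·W_2(u)·ρ^l(S^2)) satisfies (α f_ε(λ,u,·))(z) = (θ_{01}(λ/2,τ/2)/θ_{01}((λ+4εlη)/2,τ/2)) · 2θ_{11}(u−2lη,τ) · f_ε(λ,u+2η,z) for every z ∈ ℂ with θ_{11}(2z,τ) ≠ 0. -/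
noncomputable section

open Complex

/-- Theta function with characteristics `θ_{ab}(z,τ)`. -/
def theta (a b : ℝ) (z τ : ℂ) : ℂ :=
  ∑' n : ℤ, Complex.exp ((Real.pi : ℂ) * Complex.I * ((a : ℂ)/2 + (n : ℂ))^2 * τ +
    2 * (Real.pi : ℂ) * Complex.I * ((a : ℂ)/2 + (n : ℂ)) * ((b : ℂ)/2 + z))

/-- `[z;a]_k := ∏_{j=0}^{k-1} θ₁₁(z+a+2jη,τ) θ₁₁(-z+a+2jη,τ)`. -/
def brK (η τ z a : ℂ) (k : ℕ) : ℂ :=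
  ∏ j ∈ Finset.range k,
    theta 1 1 (z + a + 2*(j:ℂ)*η) τ * theta 1 1 (-z + a + 2*(j:ℂ)*η) τ

/-- `f_ε(λ,u,z) := [z;(ελ+u)/2+(-l+1)η]_{2l}`, with `tl = 2l`. -/
def fEps (η τ l : ℂ) (tl : ℕ) (ε lam u z : ℂ) : ℂ :=
  brK η τ z ((ε*lam + u)/2 + (-l+1)*η) tl

/-- `ω_λ(u;v)(z) := [z;(λ+u-v)/2+(-l+1)η]_{2l}`. -/
def omegaFn (η τ l : ℂ) (tl : ℕ) (lam u v z : ℂ) : ℂ :=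
  brK η τ z ((lam + u - v)/2 + (-l+1)*η) tl

def s0f (η τ z : ℂ) : ℂ := theta 1 1 η τ * theta 1 1 (2*z) τ
def s1f (η τ z : ℂ) : ℂ := theta 1 0 η τ * theta 1 0 (2*z) τ
def s2f (η τ z : ℂ) : ℂ := Complex.I * theta 0 0 η τ * theta 0 0 (2*z) τ
def s3f (η τ z : ℂ) : ℂ := theta 0 1 η τ * theta 0 1 (2*z) τ

/-- The difference operator `ρ^l(S^a)` associated to the coefficient function `s`. -/
def rhoS (η τ l : ℂ) (s : ℂ → ℂ) : (ℂ → ℂ) →ₗ[ℂ] (ℂ → ℂ) where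
  toFun f := fun z =>
    (s (z - l*η) * f (z + η) - s (-z - l*η) * f (z - η)) / theta 1 1 (2*z) τ
  map_add' f g := by
    funext z
    simp only [Pi.add_apply]
    ring
  map_smul' c f := by
    funext z
    simp only [Pi.smul_apply, smul_eq_mul, RingHom.id_apply]
    ring

def W0 (η τ u : ℂ) : ℂ := theta 1 1 u τ / theta 1 1 η τ
def W1 (η τ u : ℂ) : ℂ := theta 1 0 u τ / theta 1 0 η τ
def W2 (η τ u : ℂ) : ℂ := theta 0 0 u τ / theta 0 0 η τ
def W3 (η τ u : ℂ) : ℂ := theta 0 1 u τ / theta 0 1 η τ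

/-- `θ^{(2l)}_{00}(u) := ∏_{j=0}^{2l-1} θ₀₀(u+(2j-2l+1)η,τ)`, with `tl = 2l`. -/
def theta2l (η τ : ℂ) (tl : ℕ) (u : ℂ) : ℂ :=
  ∏ j ∈ Finset.range tl, theta 0 0 (u + (2*(j:ℂ) - (tl:ℂ) + 1)*η) τ

/-- The gauge transformation matrix `M_λ(v)`. -/
def Mlam (τ lam v : ℂ) : Matrix (Fin 2) (Fin 2) ℂ :=
  !![-theta 0 0 ((lam - v)/2) (τ/2), -theta 0 0 ((lam + v)/2) (τ/2);
     theta 0 1 ((lam - v)/2) (τ/2), theta 0 1 ((lam + v)/2) (τ/2)]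

/-- The `L`-operator as a 2×2 matrix of difference operators. -/
def LopM (η τ l u : ℂ) : Matrix (Fin 2) (Fin 2) (Module.End ℂ (ℂ → ℂ)) :=
  !![W0 η τ u • rhoS η τ l (s0f η τ) + W3 η τ u • rhoS η τ l (s3f η τ),
     W1 η τ u • rhoS η τ l (s1f η τ) - (Complex.I * W2 η τ u) • rhoS η τ l (s2f η τ);
     W1 η τ u • rhoS η τ l (s1f η τ) + (Complex.I * W2 η τ u) • rhoS η τ l (s2f η τ),
     W0 η τ u • rhoS η τ l (s0f η τ) - W3 η τ u • rhoS η τ l (s3f η τ)]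

/-- `N := adj(M_{λ₀+4(j+ε)lη}(v)) · L(u) · M_{λ₀+4jlη}(v)`. -/
def NMat (η τ l lam0 v u : ℂ) (j : ℤ) (ε : ℂ) :
    Matrix (Fin 2) (Fin 2) (Module.End ℂ (ℂ → ℂ)) :=
  ((Mlam τ (lam0 + 4*((j:ℂ)+ε)*l*η) v).adjugate).map
      (algebraMap ℂ (Module.End ℂ (ℂ → ℂ))) *
    LopM η τ l u *
    (Mlam τ (lam0 + 4*(j:ℂ)*l*η) v).map (algebraMap ℂ (Module.End ℂ (ℂ → ℂ)))

/-- The kernel `μ(z,w)` of the Sklyanin form. -/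
def muK (η τ : ℂ) (tl : ℕ) (z w : ℂ) : ℂ :=
  theta 1 1 (2*z) τ * theta 1 1 (2*w) τ /
    ∏ j ∈ Finset.range (tl + 2),
      (theta 0 0 (z + w + (2*(j:ℂ) - (tl:ℂ) - 1)*η) τ *
       theta 0 0 (z - w + (2*(j:ℂ) - (tl:ℂ) - 1)*η) τ)

/-- Integrand of the Sklyanin form. -/
def sklIntegrand (η τ : ℂ) (tl : ℕ) (f g : ℂ → ℂ) (x y : ℝ) : ℂ :=
  (starRingEnd ℂ) (f ((x:ℂ) + (y:ℂ)*Complex.I)) * g ((x:ℂ) + (y:ℂ)*Complex.I) *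
    muK η τ tl ((x:ℂ) + (y:ℂ)*Complex.I) ((x:ℂ) - (y:ℂ)*Complex.I)

/-- The Sklyanin form `⟨f,g⟩` (with `τ = i t₀`). -/
def sklForm (η τ : ℂ) (tl : ℕ) (t0 : ℝ) (f g : ℂ → ℂ) : ℂ :=
  ∫ x in (0:ℝ)..1, ∫ y in (0:ℝ)..t0, sklIntegrand η τ tl f g x y

/-- The constant `C_{2l}`. -/
def C2l (η τ : ℂ) (tl : ℕ) : ℂ :=
  (-2*η * Complex.exp (3*(Real.pi:ℂ)*Complex.I*τ/4)) /
    (theta 1 1 (2*((tl:ℂ)+1)*η) τ *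
      ∏' j : ℕ, (1 - Complex.exp (2*(Real.pi:ℂ)*Complex.I*((j:ℂ)+1)*τ))^3)

/-!
Combining the generators, `α = ρ^l(s)` for the single coefficient
`s(y) = θ₁₁(u)θ₁₁(2y) + θ₀₁(u)θ₀₁(2y) - p'(θ₁₀(u)θ₁₀(2y) - θ₀₀(u)θ₀₀(2y))`. As `θ₀₀`, `θ₀₁` are
even, `ε` enters only through `a = ελ/2`; put `μ = a + 2lη` and `c = a + u/2 + (1 - l)η`, so that
`f_ε(λ,u,·) = [·; c]_{2l}` and `f_ε(λ,u+2η,·) = [·; c + η]_{2l}`. Landen-type product formulas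
(split a double theta series by the parity of the indices) factor `s(z - lη)`, up to
`-2/θ₀₁(μ; τ/2)`, as `θ₀₁(u/2 + z - lη; τ/2) θ₁₁(c + (4l - 1)η - z) θ₁₁(u/2 - a - lη - z)`.
The middle factor is exactly what `[z + η; c]_{2l}` lacks to become
`θ₁₁(c - η - z) [z; c + η]_{2l}`, so both terms of `α f` are multiples of `[z; c + η]_{2l}`, and
a three-term relation between `θ₁₁` and `θ₀₁(·; τ/2)` collapses their difference.
-/
open Real

def thetaTerm (a b : ℝ) (z τ : ℂ) (n : ℤ) : ℂ :=
  cexp (π * I * ((a : ℂ) / 2 + n) ^ 2 * τ + 2 * π * I * ((a : ℂ) / 2 + n) * ((b : ℂ) / 2 + z))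

lemma theta_eq_tsum (a b : ℝ) (z τ : ℂ) : theta a b z τ = ∑' n : ℤ, thetaTerm a b z τ n := rfl

lemma thetaTerm_eq_mul_jacobiTheta₂_term (a b : ℝ) (z τ : ℂ) (n : ℤ) :
    thetaTerm a b z τ n = cexp (π * I * ((a : ℂ) / 2) ^ 2 * τ + π * I * a * ((b : ℂ) / 2 + z)) *
      jacobiTheta₂_term n ((b : ℂ) / 2 + z + (a : ℂ) / 2 * τ) τ := by
  rw [thetaTerm, jacobiTheta₂_term, ← Complex.exp_add]
  ring_nf

lemma summable_norm_thetaTerm (a b : ℝ) {τ : ℂ} (hτ : 0 < τ.im) (z : ℂ) :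
    Summable fun n : ℤ => ‖thetaTerm a b z τ n‖ := by
  simp_rw [thetaTerm_eq_mul_jacobiTheta₂_term]
  exact summable_norm_iff.mpr (((summable_jacobiTheta₂_term_iff _ τ).mpr hτ).mul_left _)

lemma hasSum_thetaTerm (a b : ℝ) {τ : ℂ} (hτ : 0 < τ.im) (z : ℂ) :
    HasSum (thetaTerm a b z τ) (theta a b z τ) :=
  (summable_norm_iff.mp (summable_norm_thetaTerm a b hτ z)).hasSum

lemma hasSum_thetaTerm_mul (a b a' b' : ℝ) {τ : ℂ} (hτ : 0 < τ.im) (x y : ℂ) :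
    HasSum (fun p : ℤ × ℤ => thetaTerm a b x τ p.1 * thetaTerm a' b' y τ p.2)
      (theta a b x τ * theta a' b' y τ) :=
  (hasSum_thetaTerm a b hτ x).mul (hasSum_thetaTerm a' b' hτ y)
    (summable_mul_of_summable_norm (summable_norm_thetaTerm a b hτ x)
      (summable_norm_thetaTerm a' b' hτ y))

lemma theta_neg (a b : ℝ) (z τ : ℂ) : theta a b (-z) τ = theta (-a) (-b) z τ := by
  rw [theta_eq_tsum, theta_eq_tsum, ← (Equiv.neg ℤ).tsum_eq]
  congr 1
  ext n
  simp only [thetaTerm, Equiv.neg_apply]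
  push_cast
  ring_nf

lemma theta_char_add_two (a b : ℝ) (z τ : ℂ) :
    theta a (b + 2) z τ = cexp (π * I * a) * theta a b z τ := by
  rw [theta_eq_tsum, theta_eq_tsum, ← tsum_mul_left]
  congr 1
  ext n
  have h : thetaTerm a (b + 2) z τ n =
      cexp (π * I * a) * thetaTerm a b z τ n * cexp (n * (2 * π * I)) := by
    rw [thetaTerm, thetaTerm, ← Complex.exp_add, ← Complex.exp_add]
    push_cast
    ring_nf
  rw [h, Complex.exp_int_mul_two_pi_mul_I, mul_one]

def diagonalSplit : (ℤ × ℤ) ⊕ (ℤ × ℤ) → ℤ × ℤ :=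
  Sum.elim (fun p => (p.1 + p.2, p.1 - p.2)) (fun p => (p.1 + p.2 + 1, p.1 - p.2))

lemma diagonalSplit_bijective : Function.Bijective diagonalSplit := by
  constructor
  · rintro (⟨m, n⟩ | ⟨m, n⟩) (⟨m', n'⟩ | ⟨m', n'⟩) h <;>
      simp only [diagonalSplit, Sum.elim_inl, Sum.elim_inr, Prod.mk.injEq] at h <;>
      first | omega | (congr 2 <;> omega)
  · rintro ⟨r, s⟩
    obtain ⟨k, hk | hk⟩ := Int.even_or_odd' (r - s)
    · exact ⟨.inl (s + k, k), by simp only [diagonalSplit, Sum.elim_inl, Prod.mk.injEq]; omega⟩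
    · exact ⟨.inr (s + k, k), by simp only [diagonalSplit, Sum.elim_inr, Prod.mk.injEq]; omega⟩

lemma theta_half_mul_theta_half (b b' : ℝ) {τ : ℂ} (hτ : 0 < τ.im) (x y : ℂ) :
    theta 0 b x (τ / 2) * theta 0 b' y (τ / 2) =
      theta 0 (b + b') (x + y) τ * theta 0 (b - b') (x - y) τ +
        theta 1 (b + b') (x + y) τ * theta 1 (b - b') (x - y) τ := by
  have hτ₂ : 0 < (τ / 2).im := by rw [Complex.div_ofNat_im]; positivity
  -- With `(M, N) = (m + n, m - n)` or `(m + n + 1, m - n)`, the exponent `(M² + N²) τ / 2`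
  -- becomes `(m² + n²) τ` or `((m + ½)² + (n + ½)²) τ`.
  set F : ℤ × ℤ → ℂ := fun p => thetaTerm 0 b x (τ / 2) p.1 * thetaTerm 0 b' y (τ / 2) p.2
  have hsplit : HasSum (F ∘ diagonalSplit) _ :=
    HasSum.sum (f := F ∘ diagonalSplit)
      ((hasSum_thetaTerm_mul 0 (b + b') 0 (b - b') hτ (x + y) (x - y)).congr_fun fun p => ?_)
      ((hasSum_thetaTerm_mul 1 (b + b') 1 (b - b') hτ (x + y) (x - y)).congr_fun fun p => ?_)
  · exact (hasSum_thetaTerm_mul 0 b 0 b' hτ₂ x y).unique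
      ((Equiv.ofBijective _ diagonalSplit_bijective).hasSum_iff.mp hsplit)
  all_goals
    simp only [F, Function.comp_apply, diagonalSplit, Sum.elim_inl, Sum.elim_inr, thetaTerm,
      ← Complex.exp_add]
    push_cast
    ring_nf

lemma theta_zero_char_add_two (b : ℝ) (z τ : ℂ) : theta 0 (b + 2) z τ = theta 0 b z τ := by
  simpa using theta_char_add_two 0 b z τ

lemma theta_one_char_add_two (b : ℝ) (z τ : ℂ) : theta 1 (b + 2) z τ = -theta 1 b z τ := by
  rw [theta_char_add_two, Complex.ofReal_one, mul_one, Complex.exp_pi_mul_I, neg_one_mul]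

lemma theta00_neg (z τ : ℂ) : theta 0 0 (-z) τ = theta 0 0 z τ := by
  simpa using theta_neg 0 0 z τ

lemma theta01_neg (z τ : ℂ) : theta 0 1 (-z) τ = theta 0 1 z τ := by
  rw [theta_neg, neg_zero, ← theta_zero_char_add_two]
  norm_num

lemma theta01_half_mul_theta00_half {τ : ℂ} (hτ : 0 < τ.im) (x y : ℂ) :
    theta 0 1 ((x + y) / 2) (τ / 2) * theta 0 0 ((x - y) / 2) (τ / 2) =
      theta 0 1 x τ * theta 0 1 y τ + theta 1 1 x τ * theta 1 1 y τ := by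
  rw [theta_half_mul_theta_half 1 0 hτ]
  ring_nf

lemma theta01_half_mul_theta01_half {τ : ℂ} (hτ : 0 < τ.im) (x y : ℂ) :
    theta 0 1 ((x + y) / 2) (τ / 2) * theta 0 1 ((x - y) / 2) (τ / 2) =
      theta 0 0 x τ * theta 0 0 y τ - theta 1 0 x τ * theta 1 0 y τ := by
  have h := theta_half_mul_theta_half 1 1 hτ ((x + y) / 2) ((x - y) / 2)
  rw [show (1 : ℝ) + 1 = 0 + 2 by norm_num, theta_zero_char_add_two, theta_one_char_add_two] at h
  rw [h]
  ring_nf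

lemma theta00_half_mul_theta01_half_sub {τ : ℂ} (hτ : 0 < τ.im) (x y : ℂ) :
    theta 0 0 x (τ / 2) * theta 0 1 y (τ / 2) - theta 0 1 x (τ / 2) * theta 0 0 y (τ / 2) =
      -2 * (theta 1 1 (x + y) τ * theta 1 1 (x - y) τ) := by
  have h0 := theta_zero_char_add_two (-1) (x - y) τ
  have h1 := theta_one_char_add_two (-1) (x - y) τ
  rw [show (-1 : ℝ) + 2 = 1 by norm_num] at h0 h1
  rw [theta_half_mul_theta_half 0 1 hτ, theta_half_mul_theta_half 1 0 hτ, zero_add, zero_sub,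
    add_zero, sub_zero]
  linear_combination -theta 0 1 (x + y) τ * h0 + theta 1 1 (x + y) τ * h1

lemma theta11_three_term {τ : ℂ} (hτ : 0 < τ.im) (x y a : ℂ) :
    theta 0 1 x (τ / 2) * (theta 1 1 (y + a) τ * theta 1 1 (y - a) τ) -
        theta 0 1 y (τ / 2) * (theta 1 1 (x + a) τ * theta 1 1 (x - a) τ) =
      -theta 0 1 a (τ / 2) * (theta 1 1 (x + y) τ * theta 1 1 (x - y) τ) := by
  linear_combination (theta 0 1 x (τ / 2) / 2) * theta00_half_mul_theta01_half_sub hτ y a -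
    (theta 0 1 y (τ / 2) / 2) * theta00_half_mul_theta01_half_sub hτ x a +
    (theta 0 1 a (τ / 2) / 2) * theta00_half_mul_theta01_half_sub hτ x y

lemma theta_zero_char_mul_sign {b : ℝ} (hb : b = 0 ∨ b = 1) {ε : ℂ} (hε : ε = 1 ∨ ε = -1)
    (z τ : ℂ) : theta 0 b (ε * z) τ = theta 0 b z τ := by
  rcases hε with rfl | rfl
  · rw [one_mul]
  · rcases hb with rfl | rfl
    · rw [neg_one_mul, theta00_neg]
    · rw [neg_one_mul, theta01_neg]

section Operator

variable (η τ l : ℂ)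

lemma rhoS_apply (s f : ℂ → ℂ) (z : ℂ) :
    rhoS η τ l s f z =
      (s (z - l * η) * f (z + η) - s (-z - l * η) * f (z - η)) / theta 1 1 (2 * z) τ := rfl

lemma smul_rhoS (c : ℂ) (s : ℂ → ℂ) : c • rhoS η τ l s = rhoS η τ l (c • s) := by
  ext f z
  simp only [LinearMap.smul_apply, Pi.smul_apply, rhoS_apply, smul_eq_mul]
  ring

lemma rhoS_add (s t : ℂ → ℂ) : rhoS η τ l s + rhoS η τ l t = rhoS η τ l (s + t) := by
  ext f z
  simp only [LinearMap.add_apply, Pi.add_apply, rhoS_apply]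
  ring

lemma rhoS_sub (s t : ℂ → ℂ) : rhoS η τ l s - rhoS η τ l t = rhoS η τ l (s - t) := by
  ext f z
  simp only [LinearMap.sub_apply, Pi.sub_apply, rhoS_apply]
  ring

end Operator

def alphaCoeff (τ u p y : ℂ) : ℂ :=
  theta 1 1 u τ * theta 1 1 (2 * y) τ + theta 0 1 u τ * theta 0 1 (2 * y) τ -
    p * (theta 1 0 u τ * theta 1 0 (2 * y) τ - theta 0 0 u τ * theta 0 0 (2 * y) τ)

lemma weighted_sum_eq_alphaCoeff {η τ : ℂ} (h11 : theta 1 1 η τ ≠ 0)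
    (h10 : theta 1 0 η τ ≠ 0) (h00 : theta 0 0 η τ ≠ 0) (h01 : theta 0 1 η τ ≠ 0) (u p : ℂ) :
    W0 η τ u • s0f η τ + W3 η τ u • s3f η τ -
        p • (W1 η τ u • s1f η τ + (I * W2 η τ u) • s2f η τ) = alphaCoeff τ u p := by
  ext y
  simp only [Pi.add_apply, Pi.sub_apply, Pi.smul_apply, smul_eq_mul, alphaCoeff,
    W0, W1, W2, W3, s0f, s1f, s2f, s3f]
  field_simp
  linear_combination (-p * theta 0 0 u τ * theta 0 0 (2 * y) τ) * I_sq

lemma alphaCoeff_factor {τ : ℂ} (hτ : 0 < τ.im) {μ : ℂ} (hμ : theta 0 1 μ (τ / 2) ≠ 0)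
    (u y : ℂ) :
    alphaCoeff τ u (-theta 0 0 μ (τ / 2) / theta 0 1 μ (τ / 2)) y =
      -2 * theta 0 1 (u / 2 + y) (τ / 2) *
        (theta 1 1 (u / 2 - y + μ) τ * theta 1 1 (u / 2 - y - μ) τ) / theta 0 1 μ (τ / 2) := by
  have ha := theta01_half_mul_theta00_half hτ u (2 * y)
  have hb := theta01_half_mul_theta01_half hτ u (2 * y)
  have hc := theta00_half_mul_theta01_half_sub hτ (u / 2 - y) μ
  rw [show (u + 2 * y) / 2 = u / 2 + y by ring, show (u - 2 * y) / 2 = u / 2 - y by ring] at ha hb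
  rw [alphaCoeff, eq_div_iff hμ]
  linear_combination (-theta 0 1 μ (τ / 2)) * ha + theta 0 0 μ (τ / 2) * hb +
    theta 0 1 (u / 2 + y) (τ / 2) * hc +
    theta 0 0 μ (τ / 2) * (theta 1 0 u τ * theta 1 0 (2 * y) τ -
      theta 0 0 u τ * theta 0 0 (2 * y) τ) * mul_inv_cancel₀ hμ

lemma brK_neg (η τ z a : ℂ) (k : ℕ) : brK η τ (-z) a k = brK η τ z a k := by
  simp only [brK, neg_neg, mul_comm]

lemma brK_add_mul (η τ z c : ℂ) (k : ℕ) :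
    brK η τ (z + η) c k * theta 1 1 (-z + c + (2 * k - 1) * η) τ =
      theta 1 1 (c - η - z) τ * brK η τ z (c + η) k := by
  set g : ℕ → ℂ := fun j => theta 1 1 (-(z + η) + c + 2 * j * η) τ
  have hshift : (∏ j ∈ Finset.range k, g j) * g k = (∏ j ∈ Finset.range k, g (j + 1)) * g 0 :=
    (Finset.prod_range_succ g k).symm.trans (Finset.prod_range_succ' g k)
  simp only [brK, Finset.prod_mul_distrib]
  convert congrArg ((∏ j ∈ Finset.range k, theta 1 1 (z + η + c + 2 * j * η) τ) * ·) hshift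
    using 1
  · simp only [g]
    ring_nf
  · simp only [g]
    push_cast
    ring_nf

section Eigenvector

variable {τ η l a u c : ℂ} {k : ℕ}

lemma alphaCoeff_mul_brK (hτ : 0 < τ.im) (hμ : theta 0 1 (a + 2 * l * η) (τ / 2) ≠ 0)
    (hk : (k : ℂ) = 2 * l) (hc : c = a + u / 2 + (1 - l) * η) (z : ℂ) :
    alphaCoeff τ u (-theta 0 0 (a + 2 * l * η) (τ / 2) / theta 0 1 (a + 2 * l * η) (τ / 2))
        (z - l * η) * brK η τ (z + η) c k =
      -2 * theta 0 1 (u / 2 + z - l * η) (τ / 2) *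
        (theta 1 1 (c - η - z) τ * theta 1 1 (u / 2 - a - l * η - z) τ) /
          theta 0 1 (a + 2 * l * η) (τ / 2) * brK η τ z (c + η) k := by
  have hshift := brK_add_mul η τ z c k
  rw [alphaCoeff_factor hτ hμ, show u / 2 - (z - l * η) + (a + 2 * l * η) =
      -z + c + (2 * k - 1) * η by rw [hc, hk]; ring,
    show u / 2 - (z - l * η) - (a + 2 * l * η) = u / 2 - a - l * η - z by ring,
    show u / 2 + (z - l * η) = u / 2 + z - l * η by ring]
  linear_combination (-2 * theta 0 1 (u / 2 + z - l * η) (τ / 2) *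
    theta 1 1 (u / 2 - a - l * η - z) τ / theta 0 1 (a + 2 * l * η) (τ / 2)) * hshift

lemma alphaCoeff_mul_brK_sub (hτ : 0 < τ.im) (hμ : theta 0 1 (a + 2 * l * η) (τ / 2) ≠ 0)
    (hk : (k : ℂ) = 2 * l) (hc : c = a + u / 2 + (1 - l) * η) (z : ℂ) :
    alphaCoeff τ u (-theta 0 0 (a + 2 * l * η) (τ / 2) / theta 0 1 (a + 2 * l * η) (τ / 2))
          (z - l * η) * brK η τ (z + η) c k -
        alphaCoeff τ u (-theta 0 0 (a + 2 * l * η) (τ / 2) / theta 0 1 (a + 2 * l * η) (τ / 2))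
          (-z - l * η) * brK η τ (z - η) c k =
      theta 0 1 a (τ / 2) / theta 0 1 (a + 2 * l * η) (τ / 2) * (2 * theta 1 1 (u - 2 * l * η) τ) *
        theta 1 1 (2 * z) τ * brK η τ z (c + η) k := by
  have hplus := alphaCoeff_mul_brK hτ hμ hk hc z
  have hminus := alphaCoeff_mul_brK hτ hμ hk hc (-z)
  rw [show -z + η = -(z - η) by ring, brK_neg, brK_neg] at hminus
  have h3 := theta11_three_term hτ (u / 2 + z - l * η) (u / 2 + -z - l * η) a
  rw [show u / 2 + -z - l * η + a = c - η - z by rw [hc]; ring,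
    show u / 2 + -z - l * η - a = u / 2 - a - l * η - z by ring,
    show u / 2 + z - l * η + a = c - η - -z by rw [hc]; ring,
    show u / 2 + z - l * η - a = u / 2 - a - l * η - -z by ring,
    show u / 2 + z - l * η + (u / 2 + -z - l * η) = u - 2 * l * η by ring,
    show u / 2 + z - l * η - (u / 2 + -z - l * η) = 2 * z by ring] at h3
  linear_combination hplus - hminus +
    (-2 / theta 0 1 (a + 2 * l * η) (τ / 2) * brK η τ z (c + η) k) * h3

end Eigenvector

theorem stmt1_general (τ η l : ℂ) (hτ : 0 < τ.im) (tl : ℕ) (hl : (tl:ℂ) = 2*l)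
    (ε : ℂ) (hε : ε = 1 ∨ ε = -1) (lam u : ℂ)
    (h1 : theta 0 1 ((lam + 4*ε*l*η)/2) (τ/2) ≠ 0)
    (h11 : theta 1 1 η τ ≠ 0) (h10 : theta 1 0 η τ ≠ 0)
    (h00 : theta 0 0 η τ ≠ 0) (h01 : theta 0 1 η τ ≠ 0)
    (p' : ℂ)
    (hp' : p' = -theta 0 0 ((lam + 4*ε*l*η)/2) (τ/2) / theta 0 1 ((lam + 4*ε*l*η)/2) (τ/2)) :
    ∀ z : ℂ, theta 1 1 (2*z) τ ≠ 0 →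
      (W0 η τ u • rhoS η τ l (s0f η τ) + W3 η τ u • rhoS η τ l (s3f η τ)
        - p' • (W1 η τ u • rhoS η τ l (s1f η τ)
                 + (Complex.I * W2 η τ u) • rhoS η τ l (s2f η τ)))
        (fun w => fEps η τ l tl ε lam u w) z
      = (theta 0 1 (lam/2) (τ/2) / theta 0 1 ((lam + 4*ε*l*η)/2) (τ/2)) *
          (2 * theta 1 1 (u - 2*l*η) τ) * fEps η τ l tl ε lam (u + 2*η) z := by
  intro z hz
  have hε_sq : ε * ε = 1 := by rcases hε with rfl | rfl <;> norm_num
  -- `θ₀₀` and `θ₀₁` are even, so the sign `ε` can be moved into the parameter `a = ελ/2`.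
  rw [show (lam + 4 * ε * l * η) / 2 = ε * (ε * lam / 2 + 2 * l * η) by
      linear_combination (-lam / 2) * hε_sq] at h1 hp' ⊢
  rw [show lam / 2 = ε * (ε * lam / 2) by linear_combination (-lam / 2) * hε_sq]
  simp only [theta_zero_char_mul_sign (b := 0) (Or.inl rfl) hε,
    theta_zero_char_mul_sign (b := 1) (Or.inr rfl) hε] at h1 hp' ⊢
  have hc : (ε * lam + u) / 2 + (-l + 1) * η = ε * lam / 2 + u / 2 + (1 - l) * η := by ring
  simp only [hp', smul_rhoS, rhoS_add, rhoS_sub, rhoS_apply,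
    weighted_sum_eq_alphaCoeff h11 h10 h00 h01, fEps,
    show (ε * lam + (u + 2 * η)) / 2 + (-l + 1) * η = (ε * lam + u) / 2 + (-l + 1) * η + η by ring]
  rw [div_eq_iff hz, alphaCoeff_mul_brK_sub hτ h1 hl hc z]
  ring

/-- The operator α acts on `f_ε(λ,u,·)` with eigenfactor and shift `u ↦ u+2η`. -/
theorem stmt1 (τ η l : ℂ) (hτ : 0 < τ.im) (tl : ℕ) (htl : 0 < tl) (hl : (tl:ℂ) = 2*l)
    (ε : ℂ) (hε : ε = 1 ∨ ε = -1) (lam u : ℂ)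
    (h1 : theta 0 1 ((lam + 4*ε*l*η)/2) (τ/2) ≠ 0)
    (h2 : theta 0 1 (lam/2) (τ/2) ≠ 0)
    (h11 : theta 1 1 η τ ≠ 0) (h10 : theta 1 0 η τ ≠ 0)
    (h00 : theta 0 0 η τ ≠ 0) (h01 : theta 0 1 η τ ≠ 0)
    (p' : ℂ)
    (hp' : p' = -theta 0 0 ((lam + 4*ε*l*η)/2) (τ/2) / theta 0 1 ((lam + 4*ε*l*η)/2) (τ/2)) :
    ∀ z : ℂ, theta 1 1 (2*z) τ ≠ 0 →
      (W0 η τ u • rhoS η τ l (s0f η τ) + W3 η τ u • rhoS η τ l (s3f η τ)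
        - p' • (W1 η τ u • rhoS η τ l (s1f η τ)
                 + (Complex.I * W2 η τ u) • rhoS η τ l (s2f η τ)))
        (fun w => fEps η τ l tl ε lam u w) z
      = (theta 0 1 (lam/2) (τ/2) / theta 0 1 ((lam + 4*ε*l*η)/2) (τ/2)) *
          (2 * theta 1 1 (u - 2*l*η) τ) * fEps η τ l tl ε lam (u + 2*η) z :=
  stmt1_general τ η l hτ tl hl ε hε lam u h1 h11 h10 h00 h01 p' hp'
end
end

section
/- For all λ, u, z ∈ ℂ and ε ∈ {+1,−1}: e^{πil}·e^{πil(4z+τ)}·f_ε(λ,u,z+τ/2) = e^{l(τ−1)πi + 2l(ελ+u+2lη)πi}·f_ε(λ,u+τ,z). Equivalently, the operator (U_3 g)(z) := e^{πil}e^{πil(4z+τ)} g(z+τ/2) sends the function f_ε(λ,u,·) to e^{l(τ−1)πi+2l(ελ+u+2lη)πi}·f_ε(λ,u+τ,·). -/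
noncomputable section

open Complex

lemma hneg_exp (x : ℂ) : -Complex.exp x = Complex.exp (x + (Real.pi:ℂ) * Complex.I) := by
  rw [Complex.exp_add, Complex.exp_pi_mul_I]; ring

lemma theta11_sub_tau (τ w : ℂ) :
    theta 1 1 (w - τ) τ =
      -Complex.exp (-(Real.pi:ℂ)*Complex.I*τ + 2*(Real.pi:ℂ)*Complex.I*w) * theta 1 1 w τ := by
  unfold theta
  have hterm : ∀ n : ℤ,
      Complex.exp ((Real.pi : ℂ) * Complex.I * (((1:ℝ) : ℂ)/2 + (n : ℂ))^2 * τ +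
        2 * (Real.pi : ℂ) * Complex.I * (((1:ℝ) : ℂ)/2 + (n : ℂ)) * (((1:ℝ):ℂ)/2 + (w - τ)))
      = -Complex.exp (-(Real.pi:ℂ)*Complex.I*τ + 2*(Real.pi:ℂ)*Complex.I*w) *
        Complex.exp ((Real.pi : ℂ) * Complex.I * (((1:ℝ) : ℂ)/2 + ((n - 1 : ℤ) : ℂ))^2 * τ +
          2 * (Real.pi : ℂ) * Complex.I * (((1:ℝ) : ℂ)/2 + ((n - 1 : ℤ) : ℂ)) *
            (((1:ℝ):ℂ)/2 + w)) := by
    intro n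
    rw [hneg_exp, ← Complex.exp_add]
    congr 1
    push_cast
    ring
  calc (∑' n : ℤ, Complex.exp ((Real.pi : ℂ) * Complex.I * (((1:ℝ) : ℂ)/2 + (n : ℂ))^2 * τ +
        2 * (Real.pi : ℂ) * Complex.I * (((1:ℝ) : ℂ)/2 + (n : ℂ)) * (((1:ℝ):ℂ)/2 + (w - τ))))
      = ∑' n : ℤ, -Complex.exp (-(Real.pi:ℂ)*Complex.I*τ + 2*(Real.pi:ℂ)*Complex.I*w) *
          Complex.exp ((Real.pi : ℂ) * Complex.I * (((1:ℝ) : ℂ)/2 + ((n - 1 : ℤ) : ℂ))^2 * τ +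
            2 * (Real.pi : ℂ) * Complex.I * (((1:ℝ) : ℂ)/2 + ((n - 1 : ℤ) : ℂ)) *
              (((1:ℝ):ℂ)/2 + w)) := tsum_congr hterm
    _ = -Complex.exp (-(Real.pi:ℂ)*Complex.I*τ + 2*(Real.pi:ℂ)*Complex.I*w) *
          ∑' n : ℤ, Complex.exp ((Real.pi : ℂ) * Complex.I * (((1:ℝ) : ℂ)/2 + ((n - 1 : ℤ) : ℂ))^2 * τ +
            2 * (Real.pi : ℂ) * Complex.I * (((1:ℝ) : ℂ)/2 + ((n - 1 : ℤ) : ℂ)) *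
              (((1:ℝ):ℂ)/2 + w)) := tsum_mul_left
    _ = -Complex.exp (-(Real.pi:ℂ)*Complex.I*τ + 2*(Real.pi:ℂ)*Complex.I*w) *
          ∑' n : ℤ, Complex.exp ((Real.pi : ℂ) * Complex.I * (((1:ℝ) : ℂ)/2 + (n : ℂ))^2 * τ +
            2 * (Real.pi : ℂ) * Complex.I * (((1:ℝ) : ℂ)/2 + (n : ℂ)) *
              (((1:ℝ):ℂ)/2 + w)) := by
        congr 1
        have h := (Equiv.subRight (1:ℤ)).tsum_eq (fun n : ℤ =>
          Complex.exp ((Real.pi : ℂ) * Complex.I * (((1:ℝ) : ℂ)/2 + (n : ℂ))^2 * τ +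
            2 * (Real.pi : ℂ) * Complex.I * (((1:ℝ) : ℂ)/2 + (n : ℂ)) * (((1:ℝ):ℂ)/2 + w)))
        simpa using h

lemma gauss_cast (n : ℕ) : ∑ j ∈ Finset.range n, (j:ℂ) = (n:ℂ)*((n:ℂ)-1)/2 := by
  induction n with
  | zero => simp
  | succ m ih => rw [Finset.sum_range_succ, ih]; push_cast; ring

/-- `U₃` sends `f_ε(λ,u,·)` to `e^{l(τ-1)πi+2l(ελ+u+2lη)πi} f_ε(λ,u+τ,·)`. -/
theorem stmt6 (τ η l : ℂ) (hτ : 0 < τ.im) (tl : ℕ) (htl : 0 < tl) (hl : (tl:ℂ) = 2*l)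
    (ε : ℂ) (hε : ε = 1 ∨ ε = -1) (lam u z : ℂ) :
    Complex.exp ((Real.pi:ℂ)*Complex.I*l) *
        Complex.exp ((Real.pi:ℂ)*Complex.I*l*(4*z+τ)) *
        fEps η τ l tl ε lam u (z + τ/2)
      = Complex.exp (l*(τ-1)*(Real.pi:ℂ)*Complex.I
            + 2*l*(ε*lam+u+2*l*η)*(Real.pi:ℂ)*Complex.I) *
          fEps η τ l tl ε lam (u+τ) z := by
  have key : ∀ j ∈ Finset.range tl,
      theta 1 1 (z + τ/2 + ((ε*lam + u)/2 + (-l+1)*η) + 2*(j:ℂ)*η) τ *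
        theta 1 1 (-(z + τ/2) + ((ε*lam + u)/2 + (-l+1)*η) + 2*(j:ℂ)*η) τ
      = Complex.exp ((-(Real.pi:ℂ)*Complex.I*τ
            + 2*(Real.pi:ℂ)*Complex.I*(-z + ((ε*lam + (u+τ))/2 + (-l+1)*η) + 2*(j:ℂ)*η))
            + (Real.pi:ℂ)*Complex.I) *
          (theta 1 1 (z + ((ε*lam + (u+τ))/2 + (-l+1)*η) + 2*(j:ℂ)*η) τ *
           theta 1 1 (-z + ((ε*lam + (u+τ))/2 + (-l+1)*η) + 2*(j:ℂ)*η) τ) := by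
    intro j _
    have e1 : z + τ/2 + ((ε*lam + u)/2 + (-l+1)*η) + 2*(j:ℂ)*η
        = z + ((ε*lam + (u+τ))/2 + (-l+1)*η) + 2*(j:ℂ)*η := by ring
    have e2 : -(z + τ/2) + ((ε*lam + u)/2 + (-l+1)*η) + 2*(j:ℂ)*η
        = (-z + ((ε*lam + (u+τ))/2 + (-l+1)*η) + 2*(j:ℂ)*η) - τ := by ring
    rw [e1, e2, theta11_sub_tau, ← hneg_exp]
    ring
  have hsum : (∑ j ∈ Finset.range tl,
        ((-(Real.pi:ℂ)*Complex.I*τ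
            + 2*(Real.pi:ℂ)*Complex.I*(-z + ((ε*lam + (u+τ))/2 + (-l+1)*η) + 2*(j:ℂ)*η))
            + (Real.pi:ℂ)*Complex.I))
      = (tl:ℂ) * ((-(Real.pi:ℂ)*Complex.I*τ
            + 2*(Real.pi:ℂ)*Complex.I*(-z + ((ε*lam + (u+τ))/2 + (-l+1)*η)))
            + (Real.pi:ℂ)*Complex.I)
        + 4*(Real.pi:ℂ)*Complex.I*η * ((tl:ℂ)*((tl:ℂ)-1)/2) := by
    have h1 : ∀ j ∈ Finset.range tl,
        ((-(Real.pi:ℂ)*Complex.I*τ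
            + 2*(Real.pi:ℂ)*Complex.I*(-z + ((ε*lam + (u+τ))/2 + (-l+1)*η) + 2*(j:ℂ)*η))
            + (Real.pi:ℂ)*Complex.I)
        = ((-(Real.pi:ℂ)*Complex.I*τ
            + 2*(Real.pi:ℂ)*Complex.I*(-z + ((ε*lam + (u+τ))/2 + (-l+1)*η)))
            + (Real.pi:ℂ)*Complex.I) + (4*(Real.pi:ℂ)*Complex.I*η) * (j:ℂ) := by
      intro j _; ring
    rw [Finset.sum_congr rfl h1, Finset.sum_add_distrib, Finset.sum_const, ← Finset.mul_sum,
      gauss_cast, Finset.card_range, nsmul_eq_mul]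
  unfold fEps brK
  rw [Finset.prod_congr rfl key, Finset.prod_mul_distrib, ← Complex.exp_sum, hsum,
    ← mul_assoc, ← Complex.exp_add, ← Complex.exp_add]
  congr 1
  rw [show ((Real.pi:ℂ)*Complex.I*l + (Real.pi:ℂ)*Complex.I*l*(4*z+τ)
      + ((tl:ℂ) * ((-(Real.pi:ℂ)*Complex.I*τ
            + 2*(Real.pi:ℂ)*Complex.I*(-z + ((ε*lam + (u+τ))/2 + (-l+1)*η)))
            + (Real.pi:ℂ)*Complex.I)
        + 4*(Real.pi:ℂ)*Complex.I*η * ((tl:ℂ)*((tl:ℂ)-1)/2)))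
      = (l*(τ-1)*(Real.pi:ℂ)*Complex.I
            + 2*l*(ε*lam+u+2*l*η)*(Real.pi:ℂ)*Complex.I)
        + ((tl:ℤ):ℂ) * (2*(Real.pi:ℂ)*Complex.I) from by push_cast; rw [hl]; ring,
    Complex.exp_add, Complex.exp_int_mul_two_pi_mul_I, mul_one]
end
end

section
/- (Lemma 1, second identity.) Assume η = r'/(2lr) with r, r' ∈ ℤ, r > 0 (so 2rlη = r' ∈ ℤ). Then for all integers i'', j'' and every w ∈ ℂ: ∏_{k=0}^{r−1} θ^{(2l)}_{00}(2(i''−j''+2k+1)lη + w) = ∏_{k=0}^{r−1} θ^{(2l)}_{00}(2(i''−j''+2k+1)lη − w). With w = (u'−u)/2 this says that, under the assumption λ₀ − v = 2r''lη (r'' ∈ ℤ, so Im(λ₀−v) = 0), the quantities B_{ij} := θ^{(2l)}_{00}(2(i−j)lη + (u'−u)/2 + 2lη)/θ^{(2l)}_{00}(2(i−j)lη + (u−u')/2 + 2lη) satisfy ∏_{k=0}^{r−1} B_{i''+k, j''−k} = 1 whenever the denominators are nonzero. -/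
noncomputable section

open Complex

/-!
With `tl = 2l`, the `r * tl` theta factors on either side are `θ₀₀(±w + (A + 2m)η)` for
`0 ≤ m < r * tl`, where `A = tl * (i'' - j'') + 1`. Evenness of `θ₀₀` turns `θ₀₀(-w + (A + 2m)η)`
into `θ₀₀(w + (A + 2(-A - m))η)`, and since `θ₀₀` is `1`-periodic and `2 * r * tl * η ∈ ℤ`,
`m ↦ θ₀₀(w + (A + 2m)η)` is `r * tl`-periodic on `ℤ`. Both sides are therefore products of one
periodic function over `r * tl` consecutive integers. The identity for the `B`'s is the first one
at `w = (u' - u) / 2`.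
-/

open Finset Function

lemma theta_zero_zero_eq_jacobiTheta₂ (z τ : ℂ) : theta 0 0 z τ = jacobiTheta₂ z τ := by
  refine tsum_congr fun n ↦ congrArg cexp ?_
  push_cast
  ring

lemma Finset.prod_range_mul_eq_prod_prod {M : Type*} [CommMonoid M] (f : ℕ → M) (r t : ℕ) :
    ∏ m ∈ range (r * t), f m = ∏ k ∈ range r, ∏ j ∈ range t, f (k * t + j) := by
  induction r with
  | zero => simp
  | succ r ih => rw [prod_range_succ, Nat.succ_mul, prod_range_add, ih]

namespace Function.Periodic

variable {M : Type*} [CommMonoid M] {g : ℤ → M} {N : ℕ}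

lemma prod_range_add_one (hg : Periodic g N) (a : ℤ) :
    ∏ m ∈ range N, g (a + 1 + m) = ∏ m ∈ range N, g (a + m) := by
  cases N with
  | zero => simp
  | succ N =>
    rw [prod_range_succ, prod_range_succ', Nat.cast_zero, add_zero, ← hg a]
    push_cast
    simp only [add_assoc, add_comm (1 : ℤ)]

lemma prod_range_add (hg : Periodic g N) (a : ℤ) :
    ∏ m ∈ range N, g (a + m) = ∏ m ∈ range N, g m := by
  induction a using Int.induction_on with
  | zero => simp
  | succ a ih => rw [hg.prod_range_add_one, ih]
  | pred a ih => rw [← ih, ← hg.prod_range_add_one, sub_add_cancel]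

lemma prod_range_sub (hg : Periodic g N) (b : ℤ) :
    ∏ m ∈ range N, g (b - m) = ∏ m ∈ range N, g m := by
  rw [← prod_range_reflect, ← hg.prod_range_add (b - N + 1)]
  refine prod_congr rfl fun m hm ↦ congrArg g ?_
  have hm : m < N := mem_range.1 hm
  rw [Nat.cast_sub (by omega), Nat.cast_sub (by omega)]
  ring

end Function.Periodic

lemma prod_range_theta2l (η τ w : ℂ) (tl r : ℕ) (a : ℤ) :
    ∏ k ∈ range r, theta2l η τ tl (tl * (a + 2 * k + 1) * η + w)
      = ∏ m ∈ range (r * tl), jacobiTheta₂ (w + ((tl * a + 1 : ℤ) + 2 * m) * η) τ := by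
  rw [prod_range_mul_eq_prod_prod]
  refine prod_congr rfl fun k _ ↦ prod_congr rfl fun j _ ↦ ?_
  rw [theta_zero_zero_eq_jacobiTheta₂]
  congr 1
  push_cast
  ring

lemma prod_range_jacobiTheta₂_neg (η τ w : ℂ) (N : ℕ) (A n : ℤ) (hη : 2 * N * η = n) :
    ∏ m ∈ range N, jacobiTheta₂ (-w + (A + 2 * m) * η) τ
      = ∏ m ∈ range N, jacobiTheta₂ (w + (A + 2 * m) * η) τ := by
  set g : ℤ → ℂ := fun m ↦ jacobiTheta₂ (w + (A + 2 * m) * η) τ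
  have hg : Periodic g N := fun m ↦ by
    have h1 : Periodic (jacobiTheta₂ · τ) 1 := fun z ↦ jacobiTheta₂_add_left z τ
    simpa [g, ← hη, add_mul, mul_add, add_assoc, mul_assoc]
      using (h1.int_mul n) (w + (A + 2 * m) * η)
  calc ∏ m ∈ range N, jacobiTheta₂ (-w + (A + 2 * m) * η) τ
      _ = ∏ m ∈ range N, g (-A - m) := prod_congr rfl fun m _ ↦ by
        rw [← jacobiTheta₂_neg_left]
        congr 1
        push_cast
        ring
      _ = ∏ m ∈ range N, g m := hg.prod_range_sub (-A)

lemma prod_range_theta2l_sub (η τ w : ℂ) (tl r : ℕ) (a n : ℤ) (hη : 2 * (r * tl : ℕ) * η = n) :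
    ∏ k ∈ range r, theta2l η τ tl (tl * (a + 2 * k + 1) * η - w)
      = ∏ k ∈ range r, theta2l η τ tl (tl * (a + 2 * k + 1) * η + w) := by
  simp only [sub_eq_add_neg]
  rw [prod_range_theta2l, prod_range_theta2l,
    prod_range_jacobiTheta₂_neg η τ w _ _ n hη]

theorem stmt10_general (τ : ℂ) (η l : ℂ) (tl : ℕ)
    (hl : (tl:ℂ) = 2*l)
    (r : ℕ) (r' : ℤ) (hη : η = (r':ℂ) / (2*l*(r:ℂ))) :
    (∀ i'' j'' : ℤ, ∀ w : ℂ,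
      ∏ k ∈ Finset.range r,
          theta2l η τ tl (2*((i'':ℂ)-(j'':ℂ)+2*(k:ℂ)+1)*l*η + w)
        = ∏ k ∈ Finset.range r,
          theta2l η τ tl (2*((i'':ℂ)-(j'':ℂ)+2*(k:ℂ)+1)*l*η - w)) ∧
    (∀ i'' j'' : ℤ, ∀ u u' : ℂ,
      (∀ k ∈ Finset.range r,
        theta2l η τ tl (2*(((i'':ℂ)+(k:ℂ))-((j'':ℂ)-(k:ℂ)))*l*η
          + (u-u')/2 + 2*l*η) ≠ 0) →
      ∏ k ∈ Finset.range r,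
        (theta2l η τ tl (2*(((i'':ℂ)+(k:ℂ))-((j'':ℂ)-(k:ℂ)))*l*η
            + (u'-u)/2 + 2*l*η) /
         theta2l η τ tl (2*(((i'':ℂ)+(k:ℂ))-((j'':ℂ)-(k:ℂ)))*l*η
            + (u-u')/2 + 2*l*η)) = 1) := by
  obtain ⟨n, hn⟩ : ∃ n : ℤ, 2 * ((r * tl : ℕ) : ℂ) * η = n := by
    rcases eq_or_ne (2 * l * r) 0 with h | h
    · -- the junk-division case of `hη`, where `r * tl = 0`
      exact ⟨0, by push_cast; linear_combination (2 * η) * h + (2 * r * η) * hl⟩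
    · exact ⟨2 * r', by rw [hη]; push_cast; rw [hl, mul_div_assoc', div_eq_iff h]; ring⟩
  have harg (i j : ℤ) (k : ℕ) :
      2 * ((i : ℂ) - j + 2 * k + 1) * l * η = tl * (((i - j : ℤ) : ℂ) + 2 * k + 1) * η := by
    push_cast
    rw [hl]
    ring
  have hreflect (i j : ℤ) (w : ℂ) :
      ∏ k ∈ range r, theta2l η τ tl (2 * ((i : ℂ) - j + 2 * k + 1) * l * η + w)
        = ∏ k ∈ range r, theta2l η τ tl (2 * ((i : ℂ) - j + 2 * k + 1) * l * η - w) := by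
    simp only [harg]
    exact (prod_range_theta2l_sub η τ w tl r (i - j) n hn).symm
  refine ⟨hreflect, fun i j u u' hne ↦ ?_⟩
  have hnum (k : ℕ) : 2 * ((i + k : ℂ) - (j - k)) * l * η + (u' - u) / 2 + 2 * l * η
      = 2 * ((i : ℂ) - j + 2 * k + 1) * l * η + (u' - u) / 2 := by ring
  have hden (k : ℕ) : 2 * ((i + k : ℂ) - (j - k)) * l * η + (u - u') / 2 + 2 * l * η
      = 2 * ((i : ℂ) - j + 2 * k + 1) * l * η - (u' - u) / 2 := by ring
  simp only [hnum, hden] at hne ⊢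
  rw [prod_div_distrib, hreflect, div_self (prod_ne_zero_iff.2 hne)]

/-- Lemma 1, second identity, and `∏ B_{i''+k,j''-k} = 1`. -/
theorem stmt10 (τ : ℂ) (hτ : 0 < τ.im) (η l : ℂ) (tl : ℕ) (htl : 0 < tl)
    (hl : (tl:ℂ) = 2*l)
    (r : ℕ) (r' : ℤ) (hr : 0 < r) (hη : η = (r':ℂ) / (2*l*(r:ℂ))) :
    (∀ i'' j'' : ℤ, ∀ w : ℂ,
      ∏ k ∈ Finset.range r,
          theta2l η τ tl (2*((i'':ℂ)-(j'':ℂ)+2*(k:ℂ)+1)*l*η + w)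
        = ∏ k ∈ Finset.range r,
          theta2l η τ tl (2*((i'':ℂ)-(j'':ℂ)+2*(k:ℂ)+1)*l*η - w)) ∧
    (∀ i'' j'' : ℤ, ∀ u u' : ℂ,
      (∀ k ∈ Finset.range r,
        theta2l η τ tl (2*(((i'':ℂ)+(k:ℂ))-((j'':ℂ)-(k:ℂ)))*l*η
          + (u-u')/2 + 2*l*η) ≠ 0) →
      ∏ k ∈ Finset.range r,
        (theta2l η τ tl (2*(((i'':ℂ)+(k:ℂ))-((j'':ℂ)-(k:ℂ)))*l*η
            + (u'-u)/2 + 2*l*η) /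
         theta2l η τ tl (2*(((i'':ℂ)+(k:ℂ))-((j'':ℂ)-(k:ℂ)))*l*η
            + (u-u')/2 + 2*l*η)) = 1) :=
  stmt10_general τ η l tl hl r r' hη
end
end

section
/- For all λ, u, v, z ∈ ℂ: (i) e^{πil}·ω_λ(u;v)(z+1/2) = e^{−lπi}·ω_λ(u+1;v)(z), i.e. the operator (U_1 g)(z) := e^{πil}g(z+1/2) sends ω_λ(u;v) to e^{−lπi}·ω_λ(u+1;v); and (ii) e^{πil}·e^{πil(4z+τ)}·ω_λ(u;v)(z+τ/2) = e^{l(τ−1)πi + 2l(λ+u−v+2lη)πi}·ω_λ(u+τ;v)(z), i.e. the operator (U_3 g)(z) := e^{πil}e^{πil(4z+τ)}g(z+τ/2) sends ω_λ(u;v) to e^{l(τ−1)πi+2l(λ+u−v+2lη)πi}·ω_λ(u+τ;v). -/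
noncomputable section

open Complex

lemma theta11_add_one (z τ : ℂ) : theta 1 1 (z + 1) τ = -theta 1 1 z τ := by
  unfold theta
  rw [← tsum_neg]
  apply tsum_congr
  intro n
  have h1 : (Real.pi:ℂ)*Complex.I*(((1:ℝ):ℂ)/2+(n:ℂ))^2*τ +
      2*(Real.pi:ℂ)*Complex.I*(((1:ℝ):ℂ)/2+(n:ℂ))*(((1:ℝ):ℂ)/2+(z+1))
      = ((Real.pi:ℂ)*Complex.I*(((1:ℝ):ℂ)/2+(n:ℂ))^2*τ +
        2*(Real.pi:ℂ)*Complex.I*(((1:ℝ):ℂ)/2+(n:ℂ))*(((1:ℝ):ℂ)/2+z))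
        + (n:ℂ)*(2*(Real.pi:ℂ)*Complex.I) + (Real.pi:ℂ)*Complex.I := by
    push_cast; ring
  rw [h1, Complex.exp_add, Complex.exp_add, Complex.exp_pi_mul_I]
  have h2 : Complex.exp ((n:ℂ) * (2*(Real.pi:ℂ)*Complex.I)) = 1 := by
    simpa using Complex.exp_int_mul_two_pi_mul_I n
  rw [h2]; ring

lemma theta11_add_tau (z τ : ℂ) :
    theta 1 1 (z + τ) τ
      = -Complex.exp (-(Real.pi:ℂ)*Complex.I*τ - 2*(Real.pi:ℂ)*Complex.I*z) * theta 1 1 z τ := by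
  have hexpneg : Complex.exp (-((Real.pi:ℂ)*Complex.I)) = -1 := by
    rw [Complex.exp_neg, Complex.exp_pi_mul_I]; norm_num
  unfold theta
  conv_rhs => rw [← (Equiv.addRight (1:ℤ)).tsum_eq]
  rw [neg_mul, ← tsum_mul_left, ← tsum_neg]
  apply tsum_congr
  intro n
  simp only [Equiv.coe_addRight]
  push_cast
  have h1 : (Real.pi:ℂ)*Complex.I*(1/2+(n:ℂ))^2*τ +
      2*(Real.pi:ℂ)*Complex.I*(1/2+(n:ℂ))*(1/2+(z+τ))
      = (-(Real.pi:ℂ)*Complex.I*τ - 2*(Real.pi:ℂ)*Complex.I*z)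
        + ((Real.pi:ℂ)*Complex.I*(1/2+((n:ℂ)+1))^2*τ +
          2*(Real.pi:ℂ)*Complex.I*(1/2+((n:ℂ)+1))*(1/2+z))
        + (-((Real.pi:ℂ)*Complex.I)) := by
    ring
  rw [h1, Complex.exp_add, Complex.exp_add, hexpneg]
  ring

lemma sum_lin (A B : ℂ) (n : ℕ) :
    ∑ j ∈ Finset.range n, (A + B*(j:ℂ)) = n*A + B*(((n:ℂ)^2 - n)/2) := by
  induction n with
  | zero => simp
  | succ n ih => rw [Finset.sum_range_succ, ih]; push_cast; ring

lemma brK_shift_half (η τ z a : ℂ) (k : ℕ) :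
    brK η τ z (a + 1/2) k = (-1)^k * brK η τ (z + 1/2) a k := by
  unfold brK
  have hneg : ((-1:ℂ))^k = ∏ _j ∈ Finset.range k, (-1:ℂ) := by simp
  rw [hneg, ← Finset.prod_mul_distrib]
  apply Finset.prod_congr rfl
  intro j _
  have e1 : z + (a + 1/2) + 2*(j:ℂ)*η = (z + 1/2) + a + 2*(j:ℂ)*η := by ring
  have e2 : -z + (a + 1/2) + 2*(j:ℂ)*η = (-(z + 1/2) + a + 2*(j:ℂ)*η) + 1 := by ring
  rw [e1, e2, theta11_add_one]
  ring

lemma brK_shift_tau (η τ z a : ℂ) (k : ℕ) :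
    brK η τ z (a + τ/2) k
      = (-1)^k * Complex.exp ((k:ℂ)*(2*(Real.pi:ℂ)*Complex.I*z - 2*(Real.pi:ℂ)*Complex.I*a)
          + (-4*(Real.pi:ℂ)*Complex.I*η)*(((k:ℂ)^2 - (k:ℂ))/2))
        * brK η τ (z + τ/2) a k := by
  unfold brK
  have hsum : ∑ j ∈ Finset.range k,
          (-(Real.pi:ℂ)*Complex.I*τ - 2*(Real.pi:ℂ)*Complex.I*(-(z+τ/2)+a+2*(j:ℂ)*η))
        = (k:ℂ)*(2*(Real.pi:ℂ)*Complex.I*z - 2*(Real.pi:ℂ)*Complex.I*a)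
          + (-4*(Real.pi:ℂ)*Complex.I*η)*(((k:ℂ)^2 - (k:ℂ))/2) :=
    calc ∑ j ∈ Finset.range k,
          (-(Real.pi:ℂ)*Complex.I*τ - 2*(Real.pi:ℂ)*Complex.I*(-(z+τ/2)+a+2*(j:ℂ)*η))
        = ∑ j ∈ Finset.range k, ((2*(Real.pi:ℂ)*Complex.I*z - 2*(Real.pi:ℂ)*Complex.I*a)
          + (-4*(Real.pi:ℂ)*Complex.I*η)*(j:ℂ)) := Finset.sum_congr rfl (fun j _ => by ring)
      _ = _ := sum_lin _ _ _
  have hs : Complex.exp ((k:ℂ)*(2*(Real.pi:ℂ)*Complex.I*z - 2*(Real.pi:ℂ)*Complex.I*a)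
          + (-4*(Real.pi:ℂ)*Complex.I*η)*(((k:ℂ)^2 - (k:ℂ))/2))
      = ∏ j ∈ Finset.range k,
          Complex.exp (-(Real.pi:ℂ)*Complex.I*τ - 2*(Real.pi:ℂ)*Complex.I*(-(z+τ/2)+a+2*(j:ℂ)*η)) := by
    rw [← hsum, Complex.exp_sum]
  have hneg : ((-1:ℂ))^k = ∏ _j ∈ Finset.range k, (-1:ℂ) := by simp
  rw [hs, hneg, ← Finset.prod_mul_distrib, ← Finset.prod_mul_distrib]
  apply Finset.prod_congr rfl
  intro j _
  have e1 : z + (a + τ/2) + 2*(j:ℂ)*η = (z + τ/2) + a + 2*(j:ℂ)*η := by ring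
  have e2 : -z + (a + τ/2) + 2*(j:ℂ)*η = (-(z + τ/2) + a + 2*(j:ℂ)*η) + τ := by ring
  rw [e1, e2, theta11_add_tau]
  ring

/-- Action of `U₁` and `U₃` on `ω_λ(u;v)`. -/
theorem stmt19 (τ η l : ℂ) (hτ : 0 < τ.im) (tl : ℕ) (htl : 0 < tl) (hl : (tl:ℂ) = 2*l)
    (lam u v z : ℂ) :
    (Complex.exp ((Real.pi:ℂ)*Complex.I*l) * omegaFn η τ l tl lam u v (z + 1/2)
      = Complex.exp (-l*(Real.pi:ℂ)*Complex.I) * omegaFn η τ l tl lam (u+1) v z) ∧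
    (Complex.exp ((Real.pi:ℂ)*Complex.I*l) *
        Complex.exp ((Real.pi:ℂ)*Complex.I*l*(4*z+τ)) *
        omegaFn η τ l tl lam u v (z + τ/2)
      = Complex.exp (l*(τ-1)*(Real.pi:ℂ)*Complex.I
            + 2*l*(lam+u-v+2*l*η)*(Real.pi:ℂ)*Complex.I) *
          omegaFn η τ l tl lam (u+τ) v z) := by
  have hpow : ((-1:ℂ))^tl = Complex.exp ((tl:ℂ) * ((Real.pi:ℂ)*Complex.I)) := by
    rw [Complex.exp_nat_mul, Complex.exp_pi_mul_I]
  constructor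
  · unfold omegaFn
    have e : (lam + (u+1) - v)/2 + (-l+1)*η = ((lam + u - v)/2 + (-l+1)*η) + 1/2 := by ring
    rw [e, brK_shift_half, hpow, ← mul_assoc, ← Complex.exp_add]
    congr 2
    rw [hl]; ring
  · unfold omegaFn
    have e : (lam + (u+τ) - v)/2 + (-l+1)*η = ((lam + u - v)/2 + (-l+1)*η) + τ/2 := by ring
    rw [e, brK_shift_tau, hpow, ← Complex.exp_add, ← Complex.exp_add, ← mul_assoc,
      ← Complex.exp_add]
    congr 2
    rw [hl]; ring
end
end
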